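/- Define ψ : (0,1) → ℝ by ψ(z) = (−4z⁴ + 11z² − 3)/(9·z·(z²−3)²) − (5/(9√3))·artanh(z/√3), where artanh is the real inverse hyperbolic tangent. Then ψ is differentiable on (0,1) and ψ'(z) = (z²−1)³ / (z²·(z²−3)³) for all z ∈ (0,1); equivalently, ψ'(z) = 1/x₁(z)² with x₁(z) = z·((z²−3)/(z²−1))^(3/2). -/

import Mathlib

/-- The real inverse hyperbolic tangent,
`artanh x = (1/2)·log((1+x)/(1−x))` for `|x| < 1`. -/
noncomputable def artanh (x : ℝ) : ℝ := (1/2) * Real.log ((1 + x) / (1 - x))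

/-- The explicit quadrature (equation (eq:psi_k=2) of the paper):
`ψ(z) = (−4z⁴+11z²−3)/(9z(z²−3)²) − (5/(9√3))·artanh(z/√3)` satisfies
`ψ'(z) = (z²−1)³/(z²(z²−3)³)`, i.e. `ψ'(z) = 1/x₁(z)²` with
`x₁(z) = z·((z²−3)/(z²−1))^{3/2}`. -/
theorem psi_derivative_k2 :
    (∀ z ∈ Set.Ioo (0 : ℝ) 1,
      HasDerivAt (fun z : ℝ =>
          (-4 * z ^ 4 + 11 * z ^ 2 - 3) / (9 * z * (z ^ 2 - 3) ^ 2)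
            - (5 / (9 * Real.sqrt 3)) * artanh (z / Real.sqrt 3))
        ((z ^ 2 - 1) ^ 3 / (z ^ 2 * (z ^ 2 - 3) ^ 3)) z) ∧
    (∀ z ∈ Set.Ioo (0 : ℝ) 1,
      (z ^ 2 - 1) ^ 3 / (z ^ 2 * (z ^ 2 - 3) ^ 3)
        = 1 / (z * ((z ^ 2 - 3) / (z ^ 2 - 1)) ^ ((3 : ℝ)/2)) ^ 2) := by
  have hs3 : Real.sqrt 3 > 0 := Real.sqrt_pos.mpr (by norm_num)
  have hs3sq : Real.sqrt 3 ^ 2 = 3 := Real.sq_sqrt (by norm_num)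
  constructor
  · intro z ⟨hz0, hz1⟩
    have hzne : z ≠ 0 := ne_of_gt hz0
    have hz3 : z ^ 2 - 3 ≠ 0 := by nlinarith
    have hzlt : z < Real.sqrt 3 := lt_of_lt_of_le hz1 (by
      nlinarith [Real.sq_sqrt (show (0:ℝ) ≤ 3 by norm_num), hs3])
    have hden : 9 * z * (z ^ 2 - 3) ^ 2 ≠ 0 := by positivity
    -- rational part
    have hnum : HasDerivAt (fun z : ℝ => -4 * z ^ 4 + 11 * z ^ 2 - 3)
        (-4 * (4 * z ^ 3) + 11 * (2 * z)) z := by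
      simpa using (((hasDerivAt_pow 4 z).const_mul (-4)).add
        ((hasDerivAt_pow 2 z).const_mul 11)).sub_const 3
    have hdenD : HasDerivAt (fun z : ℝ => 9 * z * (z ^ 2 - 3) ^ 2)
        (9 * (z ^ 2 - 3) ^ 2 + 9 * z * (2 * (z ^ 2 - 3) * (2 * z))) z := by
      have h1 : HasDerivAt (fun z : ℝ => 9 * z) 9 z := by
        simpa using (hasDerivAt_id z).const_mul (9 : ℝ)
      have h2 : HasDerivAt (fun z : ℝ => (z ^ 2 - 3) ^ 2)
          (2 * (z ^ 2 - 3) * (2 * z)) z := by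
        have := ((hasDerivAt_pow 2 z).sub_const 3).fun_pow 2
        simpa [mul_comm, mul_left_comm, mul_assoc] using this
      simpa [mul_comm, mul_left_comm, mul_assoc] using h1.fun_mul h2
    have hrat := hnum.div hdenD hden
    -- artanh part
    have hu0 : (0:ℝ) < 1 + z / Real.sqrt 3 := by positivity
    have hu1 : (0:ℝ) < 1 - z / Real.sqrt 3 := by
      have : z / Real.sqrt 3 < 1 := (div_lt_one hs3).mpr hzlt
      linarith
    have huq : (1 + z / Real.sqrt 3) / (1 - z / Real.sqrt 3) ≠ 0 :=
      ne_of_gt (div_pos hu0 hu1)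
    have hxD : HasDerivAt (fun z : ℝ => z / Real.sqrt 3) (1 / Real.sqrt 3) z := by
      simpa using (hasDerivAt_id z).div_const (Real.sqrt 3)
    have huN : HasDerivAt (fun z : ℝ => 1 + z / Real.sqrt 3) (1 / Real.sqrt 3) z :=
      hxD.const_add 1
    have huD : HasDerivAt (fun z : ℝ => 1 - z / Real.sqrt 3) (-(1 / Real.sqrt 3)) z :=
      hxD.const_sub 1 |>.congr_deriv (by ring) |>.congr_deriv rfl
    have hu : HasDerivAt (fun z : ℝ => (1 + z / Real.sqrt 3) / (1 - z / Real.sqrt 3))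
        ((1 / Real.sqrt 3 * (1 - z / Real.sqrt 3)
          - (1 + z / Real.sqrt 3) * (-(1 / Real.sqrt 3))) / (1 - z / Real.sqrt 3) ^ 2) z :=
      huN.div huD (ne_of_gt hu1)
    have hlog := hu.log huq
    have hart : HasDerivAt (fun z : ℝ => (5 / (9 * Real.sqrt 3)) * artanh (z / Real.sqrt 3))
        ((5 / (9 * Real.sqrt 3)) * ((1/2) *
          (((1 / Real.sqrt 3 * (1 - z / Real.sqrt 3)
          - (1 + z / Real.sqrt 3) * (-(1 / Real.sqrt 3))) / (1 - z / Real.sqrt 3) ^ 2)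
          / ((1 + z / Real.sqrt 3) / (1 - z / Real.sqrt 3))))) z := by
      unfold artanh
      exact (hlog.const_mul (1/2 : ℝ)).const_mul _
    have h1s : (1 : ℝ) - z / Real.sqrt 3 ≠ 0 := ne_of_gt hu1
    have h1p : (1 : ℝ) + z / Real.sqrt 3 ≠ 0 := ne_of_gt hu0
    have hart2 : HasDerivAt (fun z : ℝ => (5 / (9 * Real.sqrt 3)) * artanh (z / Real.sqrt 3))
        (-5 / (9 * (z ^ 2 - 3))) z := by
      convert hart using 1
      have hmul : Real.sqrt 3 * Real.sqrt 3 = 3 := Real.mul_self_sqrt (by norm_num)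
      have hz3' : (3:ℝ) - z ^ 2 ≠ 0 := by nlinarith
      have key : (1 / Real.sqrt 3 * (1 - z / Real.sqrt 3)
          - (1 + z / Real.sqrt 3) * (-(1 / Real.sqrt 3))) / (1 - z / Real.sqrt 3) ^ 2
          / ((1 + z / Real.sqrt 3) / (1 - z / Real.sqrt 3))
          = 2 * Real.sqrt 3 / (3 - z ^ 2) := by
        have hzs : Real.sqrt 3 - z ≠ 0 := sub_ne_zero.mpr (ne_of_gt hzlt)
        have hzp : Real.sqrt 3 + z ≠ 0 := by positivity
        have e1 : 1 - z / Real.sqrt 3 = (Real.sqrt 3 - z) / Real.sqrt 3 := by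
          field_simp
        have e2 : 1 + z / Real.sqrt 3 = (Real.sqrt 3 + z) / Real.sqrt 3 := by
          field_simp
        rw [e1, e2]
        field_simp
        linear_combination (-2 * Real.sqrt 3) * hs3sq
      rw [key]
      field_simp
      ring
    have := hrat.sub hart2
    refine this.congr_deriv ?_
    field_simp
    ring
  · intro z ⟨hz0, hz1⟩
    have hzne : z ≠ 0 := ne_of_gt hz0
    have hz3 : z ^ 2 - 3 ≠ 0 := by nlinarith
    have hz1' : z ^ 2 - 1 ≠ 0 := by nlinarith
    have hw : (0:ℝ) ≤ (z ^ 2 - 3) / (z ^ 2 - 1) :=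
      le_of_lt (div_pos_of_neg_of_neg (by nlinarith) (by nlinarith))
    have hcube : (((z ^ 2 - 3) / (z ^ 2 - 1)) ^ ((3 : ℝ)/2)) ^ 2
        = ((z ^ 2 - 3) / (z ^ 2 - 1)) ^ (3 : ℕ) := by
      rw [← Real.rpow_natCast (((z ^ 2 - 3) / (z ^ 2 - 1)) ^ ((3 : ℝ)/2)) 2,
        ← Real.rpow_mul hw]
      rw [show ((3 : ℝ)/2 * ((2:ℕ):ℝ)) = ((3:ℕ):ℝ) by norm_num, Real.rpow_natCast]
    rw [mul_pow, hcube, div_pow]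
    field_simp
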